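/- arXiv:2002.03584 — 3 statements merged into one kernel-verified Lean document; each statement's English description precedes it below -/
import Mathlib

section
/- For every edge weight m₁ satisfying ∑_{uv∈E} m₁(uv)d(uv)² = D², we have δ(G,m₀,d) ≥ 1 − (D²/M)/λ₁(G,(m₀,m₁)), where δ(G,m₀,d) is the infimum of ‖bar(φ)‖² over all φ: V → ℝ^{|V|} with ∑_{u∈V} m₀(u)‖φ(u)‖² = M and ‖φ(u)−φ(v)‖ ≤ d(uv) for all edges uv. -/
open Finset
open scoped Classical

/-- The weighted graph Laplacian `(Δf)(u) = (1/m₀(u))[(∑_{v∼u} m₁(uv)) f(u) − ∑_{v∼u} m₁(uv) f(v)]`. -/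
noncomputable def lapl {V : Type*} [Fintype V] (G : SimpleGraph V) [DecidableRel G.Adj]
    (m0 : V → ℝ) (m1 : Sym2 V → ℝ) (f : V → ℝ) : V → ℝ :=
  fun u => (1 / m0 u) * ((∑ v ∈ G.neighborFinset u, m1 s(u, v)) * f u
    - ∑ v ∈ G.neighborFinset u, m1 s(u, v) * f v)

/-- `lam` is an eigenvalue of the weighted Laplacian. -/
def IsEigenval {V : Type*} [Fintype V] (G : SimpleGraph V) [DecidableRel G.Adj]
    (m0 : V → ℝ) (m1 : Sym2 V → ℝ) (lam : ℝ) : Prop :=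
  ∃ f : V → ℝ, f ≠ 0 ∧ lapl G m0 m1 f = fun u => lam * f u

/-- `lam` is the smallest nonzero eigenvalue (the second smallest eigenvalue)
of the weighted Laplacian. -/
def IsLambdaOne {V : Type*} [Fintype V] (G : SimpleGraph V) [DecidableRel G.Adj]
    (m0 : V → ℝ) (m1 : Sym2 V → ℝ) (lam : ℝ) : Prop :=
  lam ≠ 0 ∧ IsEigenval G m0 m1 lam ∧
    ∀ mu : ℝ, mu ≠ 0 → IsEigenval G m0 m1 mu → lam ≤ mu

/-- The weighted barycenter `bar(φ) = (1/M) ∑_u m₀(u) φ(u)`. -/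
noncomputable def bar {V : Type*} {n : ℕ} [Fintype V] (m0 : V → ℝ)
    (φ : V → EuclideanSpace ℝ (Fin n)) : EuclideanSpace ℝ (Fin n) :=
  (1 / ∑ u, m0 u) • ∑ u, m0 u • φ u

/-- The weighted Dirichlet energy `∑_{uv∈E} m₁(uv) ‖φ(u) − φ(v)‖²`. -/
noncomputable def edgeNormSq {V : Type*} {n : ℕ} [Fintype V] (G : SimpleGraph V)
    [DecidableRel G.Adj] (m1 : Sym2 V → ℝ) (φ : V → EuclideanSpace ℝ (Fin n)) : ℝ :=
  ∑ e ∈ G.edgeFinset, m1 e *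
    Sym2.lift ⟨fun u v => ‖φ u - φ v‖ ^ 2, fun u v => by simp only [norm_sub_rev (φ u) (φ v)]⟩ e

/-- The weighted Dirichlet energy `∑_{uv∈E} m₁(uv) (φ(u) − φ(v))²` of a scalar function. -/
noncomputable def edgeSqS {V : Type*} [Fintype V] (G : SimpleGraph V)
    [DecidableRel G.Adj] (m1 : Sym2 V → ℝ) (φ : V → ℝ) : ℝ :=
  ∑ e ∈ G.edgeFinset, m1 e *
    Sym2.lift ⟨fun u v => (φ u - φ v) ^ 2, fun u v => by simp only []; ring⟩ e

/-- The subgraph of positively weighted edges. -/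
def posSub {V : Type*} (G : SimpleGraph V) (m1 : Sym2 V → ℝ) : SimpleGraph V :=
  SimpleGraph.fromRel (fun u v => G.Adj u v ∧ 0 < m1 s(u, v))

/-- Objective values of the barycenter-minimization problem:
`‖bar(φ)‖²` over `φ : V → ℝ^{|V|}` with `∑_u m₀(u)‖φ(u)‖² = M` and
`‖φ(u) − φ(v)‖ ≤ d(uv)` for all edges `uv`.  `δ(G,m₀,d)` is its infimum. -/
noncomputable def deltaSet {V : Type*} [Fintype V] (G : SimpleGraph V) [DecidableRel G.Adj]
    (m0 : V → ℝ) (d : Sym2 V → ℝ) : Set ℝ :=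
  {r | ∃ φ : V → EuclideanSpace ℝ (Fin (Fintype.card V)),
    (∑ u, m0 u * ‖φ u‖ ^ 2) = (∑ u, m0 u) ∧
    (∀ u v, G.Adj u v → ‖φ u - φ v‖ ≤ d s(u, v)) ∧
    r = ‖bar m0 φ‖ ^ 2}

/-- Objective values of the centered variance-maximization problem:
`(1/M) ∑_u m₀(u)‖φ(u)‖²` over `φ : V → ℝ^{|V|}` with `∑_u m₀(u)φ(u) = 0` and
`‖φ(u) − φ(v)‖ ≤ d(uv)` for all edges `uv`.  `ν(G,m₀,d)` is its supremum. -/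
noncomputable def nuSet {V : Type*} [Fintype V] (G : SimpleGraph V) [DecidableRel G.Adj]
    (m0 : V → ℝ) (d : Sym2 V → ℝ) : Set ℝ :=
  {r | ∃ φ : V → EuclideanSpace ℝ (Fin (Fintype.card V)),
    (∑ u, m0 u • φ u) = 0 ∧
    (∀ u v, G.Adj u v → ‖φ u - φ v‖ ≤ d s(u, v)) ∧
    r = (1 / ∑ u, m0 u) * ∑ u, m0 u * ‖φ u‖ ^ 2}

/-- Values `λ₁(G,(m₀,m₁))` over edge weights `m₁ ≥ 0` with
`∑_{uv∈E} m₁(uv) d(uv)² = D²`.  `σ(G,m₀,d)` is its supremum. -/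
noncomputable def sigmaSet {V : Type*} [Fintype V] (G : SimpleGraph V) [DecidableRel G.Adj]
    (m0 : V → ℝ) (d : Sym2 V → ℝ) : Set ℝ :=
  {lam | ∃ m1 : Sym2 V → ℝ, (∀ e, 0 ≤ m1 e) ∧
    (∑ e ∈ G.edgeFinset, m1 e * d e ^ 2) = (∑ e ∈ G.edgeFinset, d e ^ 2) ∧
    IsLambdaOne G m0 m1 lam}

/-!
Write `ψ = φ - bar φ`. Since `∑ m₀‖φ‖² = M`, the variance is `∑ m₀‖ψ‖² = M (1 - ‖bar φ‖²)`.
Every coordinate of `ψ` has zero `m₀`-mean, so the variational characterisation of `λ₁` gives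
`λ₁ ∑ m₀‖ψ‖² ≤ ∑ m₁ ‖ψ(u) - ψ(v)‖² ≤ ∑ m₁ d² = D²`, which rearranges to the claim.

The variational bound is the spectral theorem for the Laplacian conjugated by `√m₀`, a symmetric
operator whose kernel is spanned by `√m₀` because the positively weighted subgraph is connected.
-/

open scoped RealInnerProductSpace

namespace LinearMap.IsSymmetric

variable {E : Type*} [NormedAddCommGroup E] [InnerProductSpace ℝ E] [FiniteDimensional ℝ E]
  {T : E →ₗ[ℝ] E}

theorem mul_inner_self_le_of_mem_orthogonal_ker (hT : T.IsSymmetric) {lam : ℝ}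
    (hlam : ∀ μ, μ ≠ 0 → Module.End.HasEigenvalue T μ → lam ≤ μ) {x : E}
    (hx : x ∈ (LinearMap.ker T)ᗮ) :
    lam * ⟪x, x⟫ ≤ ⟪T x, x⟫ := by
  set b := hT.eigenvectorBasis rfl
  set μ := hT.eigenvalues rfl
  have hTb (i) : T (b i) = μ i • b i := by simp [b, μ]
  have hTx : ⟪T x, x⟫ = ∑ i, μ i * ⟪x, b i⟫ ^ 2 := by
    rw [← b.sum_inner_mul_inner]
    refine Finset.sum_congr rfl fun i _ => ?_
    rw [hT, hTb, real_inner_smul_right, real_inner_comm (b i)]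
    ring
  rw [hTx, ← b.sum_inner_mul_inner, Finset.mul_sum]
  refine Finset.sum_le_sum fun i _ => ?_
  rw [real_inner_comm x, ← sq]
  by_cases hμ : μ i = 0
  · have hbi : b i ∈ LinearMap.ker T := by simp [hTb, hμ]
    simp [(Submodule.mem_orthogonal' _ _).1 hx _ hbi]
  · exact mul_le_mul_of_nonneg_right (hlam _ hμ (hT.hasEigenvalue_eigenvalues rfl i)) (sq_nonneg _)

end LinearMap.IsSymmetric

namespace SimpleGraph

variable {V : Type*} [Fintype V] (G : SimpleGraph V) [DecidableRel G.Adj]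
  {M : Type*} [AddCommMonoid M]

theorem sum_darts_eq_sum_neighborFinset (F : V → V → M) :
    ∑ d : G.Dart, F d.fst d.snd = ∑ u, ∑ v ∈ G.neighborFinset u, F u v := by
  classical
  rw [← Finset.sum_fiberwise_of_maps_to (g := fun d : G.Dart => d.fst)
    (fun d _ => Finset.mem_univ d.fst)]
  refine Finset.sum_congr rfl fun u _ => Finset.sum_bij' (fun d _ => d.snd)
    (fun v hv => ⟨(u, v), (mem_neighborFinset _ _ _).1 hv⟩) ?_ ?_ ?_ ?_ ?_
  · rintro d hd
    obtain rfl := (Finset.mem_filter.1 hd).2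
    exact (mem_neighborFinset _ _ _).2 d.adj
  · simp
  · rintro d hd
    obtain rfl := (Finset.mem_filter.1 hd).2
    rfl
  · intros; rfl
  · rintro d hd
    obtain rfl := (Finset.mem_filter.1 hd).2
    rfl

theorem sum_neighborFinset_eq_two_nsmul_sum_edgeFinset (F : Sym2 V → M) :
    ∑ u, ∑ v ∈ G.neighborFinset u, F s(u, v) = 2 • ∑ e ∈ G.edgeFinset, F e := by
  classical
  rw [← sum_darts_eq_sum_neighborFinset G (fun u v => F s(u, v)),
    ← Finset.sum_fiberwise_of_maps_to (g := Dart.edge) (t := G.edgeFinset)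
      (fun d _ => mem_edgeFinset.2 d.edge_mem), Finset.smul_sum]
  refine Finset.sum_congr rfl fun e he => ?_
  rw [Finset.sum_congr rfl fun d hd => (congrArg F (Finset.mem_filter.1 hd).2 : F d.edge = F e),
    Finset.sum_const, G.dart_edge_fiber_card e (mem_edgeFinset.1 he)]

theorem sum_neighborFinset_comm (F : V → V → M) :
    ∑ u, ∑ v ∈ G.neighborFinset u, F u v = ∑ u, ∑ v ∈ G.neighborFinset u, F v u := by
  simp only [neighborFinset_eq_filter, Finset.sum_filter]
  rw [Finset.sum_comm]
  simp only [adj_comm]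

end SimpleGraph

section Laplacian

variable {V : Type*} [Fintype V] (G : SimpleGraph V) [DecidableRel G.Adj]
  (m0 : V → ℝ) (m1 : Sym2 V → ℝ)

noncomputable def dirichletForm (f g : V → ℝ) : ℝ :=
  (1 / 2) * ∑ u, ∑ v ∈ G.neighborFinset u, m1 s(u, v) * ((f u - f v) * (g u - g v))

theorem dirichletForm_comm (f g : V → ℝ) : dirichletForm G m1 f g = dirichletForm G m1 g f := by
  simp only [dirichletForm, mul_comm (f _ - f _)]

theorem dirichletForm_self (f : V → ℝ) : dirichletForm G m1 f f = edgeSqS G m1 f := by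
  have h := G.sum_neighborFinset_eq_two_nsmul_sum_edgeFinset
    fun e => m1 e * Sym2.lift ⟨fun u v => (f u - f v) ^ 2, fun u v => by ring⟩ e
  simp only [Sym2.lift_mk, nsmul_eq_mul, Nat.cast_ofNat, sq] at h
  rw [dirichletForm, edgeSqS, h]
  ring

theorem dirichletForm_self_nonneg (hm1 : ∀ e, 0 ≤ m1 e) (f : V → ℝ) :
    0 ≤ dirichletForm G m1 f f :=
  mul_nonneg (by norm_num) <| Finset.sum_nonneg fun _ _ => Finset.sum_nonneg fun _ _ =>
    mul_nonneg (hm1 _) (mul_self_nonneg _)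

theorem sum_mul_lapl_mul (hm0 : ∀ u, m0 u ≠ 0) (f g : V → ℝ) :
    ∑ u, m0 u * lapl G m0 m1 f u * g u = dirichletForm G m1 f g := by
  have hlapl : ∑ u, m0 u * lapl G m0 m1 f u * g u =
      ∑ u, ∑ v ∈ G.neighborFinset u, m1 s(u, v) * (f u - f v) * g u := by
    refine Finset.sum_congr rfl fun u _ => ?_
    rw [lapl, ← mul_assoc, mul_one_div_cancel (hm0 u), one_mul, Finset.sum_mul,
      ← Finset.sum_sub_distrib, Finset.sum_mul]
    exact Finset.sum_congr rfl fun v _ => by ring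
  have hswap : ∑ u, ∑ v ∈ G.neighborFinset u, m1 s(u, v) * (f v - f u) * g v =
      ∑ u, ∑ v ∈ G.neighborFinset u, m1 s(u, v) * (f u - f v) * g u := by
    rw [G.sum_neighborFinset_comm]
    simp only [Sym2.eq_swap]
  have hsplit : ∑ u, ∑ v ∈ G.neighborFinset u, m1 s(u, v) * ((f u - f v) * (g u - g v)) =
      ∑ u, ∑ v ∈ G.neighborFinset u, m1 s(u, v) * (f u - f v) * g u +
        ∑ u, ∑ v ∈ G.neighborFinset u, m1 s(u, v) * (f v - f u) * g v := by
    rw [← Finset.sum_add_distrib]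
    refine Finset.sum_congr rfl fun u _ => ?_
    rw [← Finset.sum_add_distrib]
    exact Finset.sum_congr rfl fun v _ => by ring
  rw [hlapl, dirichletForm, hsplit, hswap]
  ring

theorem eq_of_dirichletForm_self_eq_zero (hm1 : ∀ e, 0 ≤ m1 e)
    (hconn : (posSub G m1).Preconnected) {f : V → ℝ} (hf : dirichletForm G m1 f f = 0)
    (u v : V) : f u = f v := by
  have hterm : ∀ u v, G.Adj u v → 0 < m1 s(u, v) → f u = f v := by
    intro u v huv hm
    have hsum : ∑ u, ∑ v ∈ G.neighborFinset u, m1 s(u, v) * ((f u - f v) * (f u - f v)) = 0 := by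
      simpa [dirichletForm] using hf
    have hnonneg : ∀ u v, 0 ≤ m1 s(u, v) * ((f u - f v) * (f u - f v)) :=
      fun _ _ => mul_nonneg (hm1 _) (mul_self_nonneg _)
    have huv0 := (Finset.sum_eq_zero_iff_of_nonneg fun v _ => hnonneg u v).1
      ((Finset.sum_eq_zero_iff_of_nonneg fun u _ => Finset.sum_nonneg fun v _ =>
        hnonneg u v).1 hsum u (Finset.mem_univ u)) v ((G.mem_neighborFinset u v).2 huv)
    rw [mul_eq_zero, mul_self_eq_zero, sub_eq_zero] at huv0
    exact huv0.resolve_left hm.ne'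
  have hadj : ∀ u v, (posSub G m1).Adj u v → f u = f v := by
    rintro u v ⟨-, h | h⟩
    · exact hterm u v h.1 h.2
    · exact (hterm v u h.1 h.2).symm
  obtain ⟨p⟩ := hconn u v
  induction p with
  | nil => rfl
  | cons h _ ih => exact (hadj _ _ h).trans ih

theorem IsEigenval.nonneg (hm0 : ∀ u, 0 < m0 u) (hm1 : ∀ e, 0 ≤ m1 e) {μ : ℝ}
    (h : IsEigenval G m0 m1 μ) : 0 ≤ μ := by
  obtain ⟨f, hf, hfμ⟩ := h
  have hmass : 0 < ∑ u, m0 u * f u ^ 2 := by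
    obtain ⟨u, hu⟩ := Function.ne_iff.1 hf
    exact Finset.sum_pos' (fun u _ => mul_nonneg (hm0 u).le (sq_nonneg _))
      ⟨u, Finset.mem_univ u, mul_pos (hm0 u) (pow_two_pos_of_ne_zero hu)⟩
  have hrayleigh : μ * ∑ u, m0 u * f u ^ 2 = dirichletForm G m1 f f := by
    rw [← sum_mul_lapl_mul G m0 m1 (fun u => (hm0 u).ne'), hfμ, Finset.mul_sum]
    exact Finset.sum_congr rfl fun u _ => by ring
  exact nonneg_of_mul_nonneg_left (hrayleigh ▸ dirichletForm_self_nonneg G m1 hm1 f) hmass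

theorem IsLambdaOne.pos (hm0 : ∀ u, 0 < m0 u) (hm1 : ∀ e, 0 ≤ m1 e) {lam : ℝ}
    (h : IsLambdaOne G m0 m1 lam) : 0 < lam :=
  (h.2.1.nonneg G m0 m1 hm0 hm1).lt_of_ne' h.1

end Laplacian

section SymmetrizedLaplacian

variable {V : Type*} [Fintype V] (G : SimpleGraph V) [DecidableRel G.Adj]
  (m0 : V → ℝ) (m1 : Sym2 V → ℝ)

noncomputable def laplLinear : (V → ℝ) →ₗ[ℝ] (V → ℝ) where
  toFun := lapl G m0 m1
  map_add' f g := by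
    ext u
    simp only [lapl, Pi.add_apply, mul_add, Finset.sum_add_distrib]
    ring
  map_smul' c f := by
    ext u
    simp only [lapl, Pi.smul_apply, smul_eq_mul, RingHom.id_apply, mul_left_comm _ c,
      ← Finset.mul_sum]
    ring

/-- The Laplacian in the coordinates `x = √m₀ · f`, in which the weighted inner product
`∑_u m₀(u) f(u) g(u)` becomes the Euclidean one. -/
noncomputable def symmLapl : EuclideanSpace ℝ V →ₗ[ℝ] EuclideanSpace ℝ V :=
  (WithLp.linearEquiv 2 ℝ (V → ℝ)).symm.toLinearMap ∘ₗ
    LinearMap.mulLeft ℝ (fun u => √(m0 u)) ∘ₗ laplLinear G m0 m1 ∘ₗ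
    LinearMap.mulLeft ℝ (fun u => (√(m0 u))⁻¹) ∘ₗ (WithLp.linearEquiv 2 ℝ (V → ℝ)).toLinearMap

theorem symmLapl_apply (x : EuclideanSpace ℝ V) (u : V) :
    symmLapl G m0 m1 x u = √(m0 u) * lapl G m0 m1 (fun v => (√(m0 v))⁻¹ * x v) u :=
  rfl

variable {m0}

theorem inner_symmLapl (hm0 : ∀ u, 0 < m0 u) (x y : EuclideanSpace ℝ V) :
    ⟪symmLapl G m0 m1 x, y⟫ =
      dirichletForm G m1 (fun v => (√(m0 v))⁻¹ * x v) (fun v => (√(m0 v))⁻¹ * y v) := by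
  rw [← sum_mul_lapl_mul G m0 m1 (fun u => (hm0 u).ne'), real_inner_comm, PiLp.inner_apply]
  refine Finset.sum_congr rfl fun u _ => ?_
  have hsq : √(m0 u) ≠ 0 := (Real.sqrt_pos.2 (hm0 u)).ne'
  rw [symmLapl_apply]
  simp only [RCLike.inner_apply, conj_trivial]
  generalize lapl G m0 m1 _ u = L
  field_simp
  rw [Real.sq_sqrt (hm0 u).le]
  ring

theorem symmLapl_isSymmetric (hm0 : ∀ u, 0 < m0 u) : (symmLapl G m0 m1).IsSymmetric :=
  fun x y => by rw [inner_symmLapl G m1 hm0, real_inner_comm, inner_symmLapl G m1 hm0,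
    dirichletForm_comm]

theorem isEigenval_of_hasEigenvalue_symmLapl (hm0 : ∀ u, 0 < m0 u) {μ : ℝ}
    (h : Module.End.HasEigenvalue (symmLapl G m0 m1) μ) : IsEigenval G m0 m1 μ := by
  obtain ⟨x, hx⟩ := h.exists_hasEigenvector
  have hsq (u : V) : √(m0 u) ≠ 0 := (Real.sqrt_pos.2 (hm0 u)).ne'
  refine ⟨fun v => (√(m0 v))⁻¹ * x v, fun hf => hx.2 ?_, funext fun u => ?_⟩
  · ext u
    simpa [hsq u] using congrFun hf u
  · have hu := congrArg (· u) (Module.End.mem_eigenspace_iff.1 hx.1)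
    simp only [symmLapl_apply, PiLp.smul_apply, smul_eq_mul] at hu
    rw [← mul_right_inj' (hsq u), hu, mul_left_comm, mul_inv_cancel_left₀ (hsq u)]

theorem mem_orthogonal_ker_symmLapl (hm0 : ∀ u, 0 < m0 u) (hm1 : ∀ e, 0 ≤ m1 e)
    (hconn : (posSub G m1).Connected) {x : EuclideanSpace ℝ V}
    (hx : ∑ u, √(m0 u) * x u = 0) : x ∈ (LinearMap.ker (symmLapl G m0 m1))ᗮ := by
  rw [Submodule.mem_orthogonal']
  intro y hy
  have hconst := eq_of_dirichletForm_self_eq_zero G m1 hm1 hconn.preconnected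
    (by rw [← inner_symmLapl G m1 hm0, LinearMap.mem_ker.1 hy, inner_zero_left])
  obtain ⟨u₀⟩ := hconn.nonempty
  have hy (u : V) : y u = √(m0 u) * ((√(m0 u₀))⁻¹ * y u₀) := by
    rw [← hconst u u₀]
    field_simp [(Real.sqrt_pos.2 (hm0 u)).ne']
  calc ⟪x, y⟫ = ∑ u, √(m0 u) * x u * ((√(m0 u₀))⁻¹ * y u₀) := by
        refine (PiLp.inner_apply x y).trans (Finset.sum_congr rfl fun u _ => ?_)
        rw [hy u, RCLike.inner_apply, conj_trivial]
        ring
    _ = 0 := by rw [← Finset.sum_mul, hx, zero_mul]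

end SymmetrizedLaplacian

section Rayleigh

variable {V : Type*} [Fintype V] {G : SimpleGraph V} [DecidableRel G.Adj]
  {m0 : V → ℝ} {m1 : Sym2 V → ℝ} {lam : ℝ}

theorem IsLambdaOne.mul_sum_sq_le_edgeSqS (hm0 : ∀ u, 0 < m0 u) (hm1 : ∀ e, 0 ≤ m1 e)
    (hconn : (posSub G m1).Connected) (hlam : IsLambdaOne G m0 m1 lam) {g : V → ℝ}
    (hg : ∑ u, m0 u * g u = 0) :
    lam * ∑ u, m0 u * g u ^ 2 ≤ edgeSqS G m1 g := by
  set x : EuclideanSpace ℝ V := WithLp.toLp 2 fun u => √(m0 u) * g u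
  have hxg : (fun v => (√(m0 v))⁻¹ * x v) = g :=
    funext fun v => inv_mul_cancel_left₀ (Real.sqrt_pos.2 (hm0 v)).ne' _
  have hx_norm : ⟪x, x⟫ = ∑ u, m0 u * g u ^ 2 := by
    simp only [real_inner_self_eq_norm_sq, EuclideanSpace.real_norm_sq_eq, x, mul_pow,
      Real.sq_sqrt (hm0 _).le]
  have hx : x ∈ (LinearMap.ker (symmLapl G m0 m1))ᗮ := by
    refine mem_orthogonal_ker_symmLapl G m1 hm0 hm1 hconn ?_
    simpa only [x, ← mul_assoc, Real.mul_self_sqrt (hm0 _).le] using hg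
  have key := (symmLapl_isSymmetric G m1 hm0).mul_inner_self_le_of_mem_orthogonal_ker
    (fun μ hμ h => hlam.2.2 μ hμ (isEigenval_of_hasEigenvalue_symmLapl G m1 hm0 h)) hx
  rwa [inner_symmLapl G m1 hm0, hxg, dirichletForm_self, hx_norm] at key

theorem edgeNormSq_eq_sum_edgeSqS {n : ℕ} (ψ : V → EuclideanSpace ℝ (Fin n)) :
    edgeNormSq G m1 ψ = ∑ k, edgeSqS G m1 fun u => ψ u k := by
  simp only [edgeNormSq, edgeSqS]
  rw [Finset.sum_comm]
  refine Finset.sum_congr rfl fun e _ => ?_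
  rw [← Finset.mul_sum]
  induction e using Sym2.ind with
  | _ u v => simp only [Sym2.lift_mk, EuclideanSpace.real_norm_sq_eq, PiLp.sub_apply]

theorem IsLambdaOne.mul_sum_norm_sq_le_edgeNormSq (hm0 : ∀ u, 0 < m0 u) (hm1 : ∀ e, 0 ≤ m1 e)
    (hconn : (posSub G m1).Connected) (hlam : IsLambdaOne G m0 m1 lam) {n : ℕ}
    {ψ : V → EuclideanSpace ℝ (Fin n)} (hψ : ∑ u, m0 u • ψ u = 0) :
    lam * ∑ u, m0 u * ‖ψ u‖ ^ 2 ≤ edgeNormSq G m1 ψ := by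
  have hcoord (k : Fin n) : ∑ u, m0 u * ψ u k = 0 := by
    simpa using congrArg (· k) hψ
  rw [edgeNormSq_eq_sum_edgeSqS]
  simp only [EuclideanSpace.real_norm_sq_eq, Finset.mul_sum]
  rw [Finset.sum_comm]
  refine Finset.sum_le_sum fun k _ => ?_
  rw [← Finset.mul_sum]
  exact hlam.mul_sum_sq_le_edgeSqS hm0 hm1 hconn (hcoord k)

end Rayleigh

section Barycenter

variable {V : Type*} [Fintype V] {n : ℕ} (m0 : V → ℝ)

theorem sum_smul_eq_sum_smul_bar (hM : ∑ u, m0 u ≠ 0) (φ : V → EuclideanSpace ℝ (Fin n)) :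
    ∑ u, m0 u • φ u = (∑ u, m0 u) • bar m0 φ := by
  rw [bar, smul_smul, mul_one_div_cancel hM, one_smul]

theorem sum_smul_sub_bar (hM : ∑ u, m0 u ≠ 0) (φ : V → EuclideanSpace ℝ (Fin n)) :
    ∑ u, m0 u • (φ u - bar m0 φ) = 0 := by
  simp only [smul_sub, Finset.sum_sub_distrib, ← Finset.sum_smul]
  rw [sum_smul_eq_sum_smul_bar m0 hM φ, sub_self]

theorem sum_mul_norm_sub_bar_sq (hM : ∑ u, m0 u ≠ 0) (φ : V → EuclideanSpace ℝ (Fin n)) :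
    ∑ u, m0 u * ‖φ u - bar m0 φ‖ ^ 2 =
      ∑ u, m0 u * ‖φ u‖ ^ 2 - (∑ u, m0 u) * ‖bar m0 φ‖ ^ 2 := by
  have hcross : ∑ u, m0 u * ⟪φ u, bar m0 φ⟫ = (∑ u, m0 u) * ‖bar m0 φ‖ ^ 2 := by
    simp only [← real_inner_smul_left, ← sum_inner]
    rw [sum_smul_eq_sum_smul_bar m0 hM, real_inner_smul_left, real_inner_self_eq_norm_sq]
  have hexpand (u : V) : m0 u * ‖φ u - bar m0 φ‖ ^ 2 =
      m0 u * ‖φ u‖ ^ 2 - 2 * (m0 u * ⟪φ u, bar m0 φ⟫) + m0 u * ‖bar m0 φ‖ ^ 2 := by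
    rw [norm_sub_sq_real]
    ring
  rw [Finset.sum_congr rfl fun u _ => hexpand u, Finset.sum_add_distrib, Finset.sum_sub_distrib,
    ← Finset.mul_sum, hcross, ← Finset.sum_mul]
  ring

end Barycenter

section Constraints

variable {V : Type*} [Fintype V] (G : SimpleGraph V) [DecidableRel G.Adj] (m1 : Sym2 V → ℝ)
  {n : ℕ}

theorem edgeNormSq_sub_const (φ : V → EuclideanSpace ℝ (Fin n)) (c : EuclideanSpace ℝ (Fin n)) :
    edgeNormSq G m1 (fun u => φ u - c) = edgeNormSq G m1 φ := by
  simp only [edgeNormSq, sub_sub_sub_cancel_right]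

theorem edgeNormSq_le_of_forall_adj (hm1 : ∀ e, 0 ≤ m1 e) {d : Sym2 V → ℝ}
    {φ : V → EuclideanSpace ℝ (Fin n)}
    (hφ : ∀ u v, G.Adj u v → ‖φ u - φ v‖ ≤ d s(u, v)) :
    edgeNormSq G m1 φ ≤ ∑ e ∈ G.edgeFinset, m1 e * d e ^ 2 := by
  refine Finset.sum_le_sum fun e he => ?_
  induction e using Sym2.ind with
  | _ u v =>
    rw [Sym2.lift_mk]
    exact mul_le_mul_of_nonneg_left (pow_le_pow_left₀ (norm_nonneg _)
      (hφ u v (G.mem_edgeSet.1 (G.mem_edgeFinset.1 he))) 2) (hm1 _)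

theorem deltaSet_nonempty [Nonempty V] (m0 : V → ℝ) {d : Sym2 V → ℝ}
    (hd : ∀ e ∈ G.edgeSet, 0 ≤ d e) : (deltaSet G m0 d).Nonempty := by
  have hcard : 0 < Fintype.card V := Fintype.card_pos
  refine ⟨_, fun _ => EuclideanSpace.single ⟨0, hcard⟩ 1, ?_, fun u v huv => ?_, rfl⟩
  · simp
  · simpa using hd _ (G.mem_edgeSet.2 huv)

end Constraints

theorem delta_ge_one_sub_lambdaOne_general {V : Type*} [Fintype V]
    (G : SimpleGraph V) [DecidableRel G.Adj]
    (m0 : V → ℝ) (hm0 : ∀ u, 0 < m0 u)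
    (d : Sym2 V → ℝ) (hd : ∀ e ∈ G.edgeSet, 0 < d e)
    (m1 : Sym2 V → ℝ) (hm1 : ∀ e, 0 ≤ m1 e) (hconn : (posSub G m1).Connected)
    (hnorm : ∑ e ∈ G.edgeFinset, m1 e * d e ^ 2 = ∑ e ∈ G.edgeFinset, d e ^ 2)
    (lam : ℝ) (hlam : IsLambdaOne G m0 m1 lam) :
    sInf (deltaSet G m0 d) ≥
      1 - ((∑ e ∈ G.edgeFinset, d e ^ 2) / (∑ u, m0 u)) / lam := by
  have : Nonempty V := hconn.nonempty
  have hM : 0 < ∑ u, m0 u := Finset.sum_pos (fun u _ => hm0 u) Finset.univ_nonempty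
  have hlam_pos : 0 < lam := hlam.pos G m0 m1 hm0 hm1
  refine le_csInf (deltaSet_nonempty G m0 fun e he => (hd e he).le) ?_
  rintro _ ⟨φ, hφ_mass, hφ_lip, rfl⟩
  have key : lam * ((∑ u, m0 u) * (1 - ‖bar m0 φ‖ ^ 2)) ≤ ∑ e ∈ G.edgeFinset, d e ^ 2 :=
    calc lam * ((∑ u, m0 u) * (1 - ‖bar m0 φ‖ ^ 2))
        = lam * ∑ u, m0 u * ‖φ u - bar m0 φ‖ ^ 2 := by
          rw [sum_mul_norm_sub_bar_sq m0 hM.ne', hφ_mass]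
          ring
      _ ≤ edgeNormSq G m1 fun u => φ u - bar m0 φ :=
          hlam.mul_sum_norm_sq_le_edgeNormSq hm0 hm1 hconn (sum_smul_sub_bar m0 hM.ne' φ)
      _ = edgeNormSq G m1 φ := edgeNormSq_sub_const G m1 φ _
      _ ≤ ∑ e ∈ G.edgeFinset, m1 e * d e ^ 2 := edgeNormSq_le_of_forall_adj G m1 hm1 hφ_lip
      _ = ∑ e ∈ G.edgeFinset, d e ^ 2 := hnorm
  rw [div_div, sub_le_comm, le_div_iff₀ (mul_pos hM hlam_pos)]
  linarith

/-- `δ(G,m₀,d) ≥ 1 − (D²/M)/λ₁(G,(m₀,m₁))` for any normalized edge weight. -/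
theorem delta_ge_one_sub_lambdaOne {V : Type*} [Fintype V] [Nonempty V]
    (G : SimpleGraph V) [DecidableRel G.Adj] (hG : G.Connected)
    (m0 : V → ℝ) (hm0 : ∀ u, 0 < m0 u)
    (d : Sym2 V → ℝ) (hd : ∀ e ∈ G.edgeSet, 0 < d e)
    (m1 : Sym2 V → ℝ) (hm1 : ∀ e, 0 ≤ m1 e) (hconn : (posSub G m1).Connected)
    (hnorm : ∑ e ∈ G.edgeFinset, m1 e * d e ^ 2 = ∑ e ∈ G.edgeFinset, d e ^ 2)
    (lam : ℝ) (hlam : IsLambdaOne G m0 m1 lam) :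
    sInf (deltaSet G m0 d) ≥
      1 - ((∑ e ∈ G.edgeFinset, d e ^ 2) / (∑ u, m0 u)) / lam :=
  delta_ge_one_sub_lambdaOne_general G m0 hm0 d hd m1 hm1 hconn hnorm lam hlam
end

section
/- If ν(G,m₀,d) ≤ 1 then δ(G,m₀,d) ≤ 1 − ν(G,m₀,d); hence together with the reverse inequality, δ(G,m₀,d) = max{1 − ν(G,m₀,d), 0}. -/
open Finset
open scoped Classical

/-! Both problems are exchanged by translation, through the parallel-axis identity
`∑ m ‖φ + c‖² = ∑ m ‖φ‖² + 2 ⟪∑ m φ, c⟫ + M ‖c‖²`. Subtracting its barycenter `b` from a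
feasible `ψ` of the δ-problem gives a centered map of variance `1 - ‖b‖²`, so `1 - δ ≤ ν`.
Conversely, translating an optimal centered `φ` by `√(1 - ν)` times a unit vector gives a
feasible point of the δ-problem whose barycenter has squared norm `1 - ν`, so `δ ≤ 1 - ν`; when
`ν ≥ 1`, shrinking `φ` by `ν^(-1/2)` gives `δ = 0` instead. Connectivity bounds the ν-problem,
so that `sSup` is its true supremum. -/

section General

variable {ι V E : Type*}

theorem SimpleGraph.Walk.norm_sub_le_sum_darts [SeminormedAddCommGroup E] {G : SimpleGraph V}
    (d : Sym2 V → ℝ) {φ : V → E} (hφ : ∀ a b, G.Adj a b → ‖φ a - φ b‖ ≤ d s(a, b))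
    {u v : V} (w : G.Walk u v) :
    ‖φ u - φ v‖ ≤ (w.darts.map fun e => d s(e.fst, e.snd)).sum := by
  induction w with
  | nil => simp
  | @cons a b c hab p ih =>
    calc ‖φ a - φ c‖ ≤ ‖φ a - φ b‖ + ‖φ b - φ c‖ := norm_sub_le_norm_sub_add_norm_sub _ _ _
      _ ≤ _ := by simpa using add_le_add (hφ a b hab) ih

theorem SimpleGraph.Connected.exists_forall_norm_sub_le [Finite V] [SeminormedAddCommGroup E]
    {G : SimpleGraph V} (hG : G.Connected) (d : Sym2 V → ℝ) :
    ∃ C, ∀ φ : V → E, (∀ a b, G.Adj a b → ‖φ a - φ b‖ ≤ d s(a, b)) → ∀ u v, ‖φ u - φ v‖ ≤ C := by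
  obtain ⟨C, hC⟩ := (Set.finite_range fun p : V × V =>
    ((hG.preconnected p.1 p.2).some.darts.map fun e => d s(e.fst, e.snd)).sum).bddAbove
  exact ⟨C, fun φ hφ u v => ((hG.preconnected u v).some.norm_sub_le_sum_darts d hφ).trans
    (hC ⟨(u, v), rfl⟩)⟩

theorem norm_le_of_sum_smul_eq_zero [Fintype ι] [SeminormedAddCommGroup E] [NormedSpace ℝ E]
    {m : ι → ℝ} (hm : ∀ i, 0 ≤ m i) (hM : 0 < ∑ i, m i) {φ : ι → E}
    (hφ : ∑ i, m i • φ i = 0) {C : ℝ} {i : ι} (hC : ∀ j, ‖φ i - φ j‖ ≤ C) : ‖φ i‖ ≤ C := by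
  refine le_of_mul_le_mul_left ?_ hM
  calc (∑ j, m j) * ‖φ i‖ = ‖∑ j, m j • (φ i - φ j)‖ := by
        rw [← norm_smul_of_nonneg hM.le]
        simp only [smul_sub, Finset.sum_sub_distrib, hφ, sub_zero, Finset.sum_smul]
    _ ≤ ∑ j, m j * C := by
        refine (norm_sum_le _ _).trans (Finset.sum_le_sum fun j _ => ?_)
        rw [norm_smul_of_nonneg (hm j)]
        exact mul_le_mul_of_nonneg_left (hC j) (hm j)
    _ = (∑ j, m j) * C := (Finset.sum_mul ..).symm

theorem sum_mul_norm_add_sq [Fintype ι] [NormedAddCommGroup E] [InnerProductSpace ℝ E]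
    (m : ι → ℝ) (φ : ι → E) (c : E) :
    ∑ i, m i * ‖φ i + c‖ ^ 2
      = ∑ i, m i * ‖φ i‖ ^ 2 + 2 * inner ℝ (∑ i, m i • φ i) c + (∑ i, m i) * ‖c‖ ^ 2 := by
  simp only [norm_add_sq_real, sum_inner, real_inner_smul_left, Finset.mul_sum, Finset.sum_mul,
    ← Finset.sum_add_distrib]
  exact Finset.sum_congr rfl fun i _ => by ring

end General

section Barycenter

variable {V : Type*} [Fintype V] {n : ℕ} {m0 : V → ℝ}

theorem smul_bar (hM : ∑ u, m0 u ≠ 0) (φ : V → EuclideanSpace ℝ (Fin n)) :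
    (∑ u, m0 u) • bar m0 φ = ∑ u, m0 u • φ u := by
  rw [bar, smul_smul, mul_one_div_cancel hM, one_smul]

theorem bar_add_const (hM : ∑ u, m0 u ≠ 0) (φ : V → EuclideanSpace ℝ (Fin n))
    (c : EuclideanSpace ℝ (Fin n)) : bar m0 (fun u => φ u + c) = bar m0 φ + c := by
  simp only [bar, smul_add, Finset.sum_add_distrib, ← Finset.sum_smul, smul_smul,
    one_div_mul_cancel hM, one_smul]

theorem bar_eq_zero {φ : V → EuclideanSpace ℝ (Fin n)} (hφ : ∑ u, m0 u • φ u = 0) :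
    bar m0 φ = 0 := by
  rw [bar, hφ, smul_zero]

end Barycenter

section Problems

variable {V : Type*} [Fintype V] {G : SimpleGraph V} [DecidableRel G.Adj] {m0 : V → ℝ}
  {d : Sym2 V → ℝ}

theorem bddAbove_nuSet [Nonempty V] (hG : G.Connected) (hm0 : ∀ u, 0 < m0 u) :
    BddAbove (nuSet G m0 d) := by
  have hM : 0 < ∑ u, m0 u := Finset.sum_pos (fun u _ => hm0 u) Finset.univ_nonempty
  obtain ⟨C, hC⟩ :=
    hG.exists_forall_norm_sub_le (E := EuclideanSpace ℝ (Fin (Fintype.card V))) d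
  refine ⟨C ^ 2, ?_⟩
  rintro _ ⟨φ, hφ, hφd, rfl⟩
  have hφC u : ‖φ u‖ ≤ C :=
    norm_le_of_sum_smul_eq_zero (fun u => (hm0 u).le) hM hφ (hC φ hφd u)
  rw [one_div, inv_mul_le_iff₀ hM, Finset.sum_mul]
  exact Finset.sum_le_sum fun u _ =>
    mul_le_mul_of_nonneg_left (pow_le_pow_left₀ (norm_nonneg _) (hφC u) 2) (hm0 u).le

theorem one_sub_mem_nuSet_of_mem_deltaSet (hM : ∑ u, m0 u ≠ 0) {r : ℝ}
    (hr : r ∈ deltaSet G m0 d) : 1 - r ∈ nuSet G m0 d := by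
  obtain ⟨ψ, hψ, hψd, rfl⟩ := hr
  have hb := smul_bar hM ψ
  have hψb : ∑ u, m0 u * ‖ψ u - bar m0 ψ‖ ^ 2 = (∑ u, m0 u) * (1 - ‖bar m0 ψ‖ ^ 2) := by
    simp only [sub_eq_add_neg, sum_mul_norm_add_sq, ← hb, hψ, inner_neg_right,
      real_inner_smul_left, real_inner_self_eq_norm_sq, norm_neg]
    ring
  refine ⟨fun u => ψ u - bar m0 ψ, ?_, fun u v h => by simpa using hψd u v h, ?_⟩
  · simp only [smul_sub, Finset.sum_sub_distrib, ← Finset.sum_smul, hb, sub_self]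
  · rw [hψb, one_div, inv_mul_cancel_left₀ hM]

theorem one_sub_mem_deltaSet_of_mem_nuSet [Nonempty V] (hM : ∑ u, m0 u ≠ 0) {r : ℝ}
    (hr : r ∈ nuSet G m0 d) (hr1 : r ≤ 1) : 1 - r ∈ deltaSet G m0 d := by
  obtain ⟨φ, hφ, hφd, rfl⟩ := hr
  set t := √(1 - (1 / ∑ u, m0 u) * ∑ u, m0 u * ‖φ u‖ ^ 2)
  have ht : t ^ 2 = 1 - (1 / ∑ u, m0 u) * ∑ u, m0 u * ‖φ u‖ ^ 2 := Real.sq_sqrt (by linarith)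
  set c : EuclideanSpace ℝ (Fin (Fintype.card V)) :=
    t • EuclideanSpace.single ⟨0, Fintype.card_pos⟩ 1
  have hc : ‖c‖ ^ 2 = t ^ 2 := by simp [c, norm_smul]
  refine ⟨fun u => φ u + c, ?_, fun u v h => by simpa using hφd u v h, ?_⟩
  · rw [sum_mul_norm_add_sq, hφ, inner_zero_left, hc, ht]
    field_simp
    ring
  · rw [bar_add_const hM, bar_eq_zero hφ, zero_add, hc, ht]

theorem zero_mem_deltaSet_of_mem_nuSet (hM : ∑ u, m0 u ≠ 0) {r : ℝ} (hr : r ∈ nuSet G m0 d)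
    (hr1 : 1 ≤ r) : 0 ∈ deltaSet G m0 d := by
  obtain ⟨φ, hφ, hφd, hr⟩ := hr
  set s := (√r)⁻¹
  have hs0 : 0 ≤ s := by positivity
  have hs1 : s ≤ 1 := inv_le_one_of_one_le₀ (Real.one_le_sqrt.mpr hr1)
  have hsr : s ^ 2 * r = 1 := by
    rw [inv_pow, Real.sq_sqrt (by linarith), inv_mul_cancel₀ (by linarith)]
  have hsφ : ∑ u, m0 u • s • φ u = 0 := by
    simp only [smul_comm (m0 _) s, ← Finset.smul_sum, hφ, smul_zero]
  refine ⟨fun u => s • φ u, ?_, fun u v h => ?_, by rw [bar_eq_zero hsφ, norm_zero]; ring⟩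
  · have hφr : ∑ u, m0 u * ‖φ u‖ ^ 2 = (∑ u, m0 u) * r := by
      rw [hr, one_div, mul_inv_cancel_left₀ hM]
    simp only [norm_smul_of_nonneg hs0, mul_pow, mul_left_comm (m0 _), ← Finset.mul_sum, hφr]
    rw [mul_left_comm, hsr, mul_one]
  · rw [← smul_sub, norm_smul_of_nonneg hs0]
    exact (mul_le_of_le_one_left (norm_nonneg _) hs1).trans (hφd u v h)

theorem deltaSet_nonneg {r : ℝ} (hr : r ∈ deltaSet G m0 d) : 0 ≤ r := by
  obtain ⟨ψ, -, -, rfl⟩ := hr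
  positivity

end Problems

theorem delta_eq_max_general {V : Type*} [Fintype V] [Nonempty V]
    (G : SimpleGraph V) [DecidableRel G.Adj] (hG : G.Connected)
    (m0 : V → ℝ) (hm0 : ∀ u, 0 < m0 u)
    (d : Sym2 V → ℝ)
    (hnu : sSup (nuSet G m0 d) ∈ nuSet G m0 d)
    (hdelta : sInf (deltaSet G m0 d) ∈ deltaSet G m0 d) :
    (sSup (nuSet G m0 d) ≤ 1 →
      sInf (deltaSet G m0 d) ≤ 1 - sSup (nuSet G m0 d)) ∧
    sInf (deltaSet G m0 d) = max (1 - sSup (nuSet G m0 d)) 0 := by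
  have hM : ∑ u, m0 u ≠ 0 := (Finset.sum_pos (fun u _ => hm0 u) Finset.univ_nonempty).ne'
  have hδ_bdd : BddBelow (deltaSet G m0 d) := ⟨0, fun _ => deltaSet_nonneg⟩
  have hδ_le (hν : sSup (nuSet G m0 d) ≤ 1) : sInf (deltaSet G m0 d) ≤ 1 - sSup (nuSet G m0 d) :=
    csInf_le hδ_bdd (one_sub_mem_deltaSet_of_mem_nuSet hM hnu hν)
  have hδ_ge : 1 - sInf (deltaSet G m0 d) ≤ sSup (nuSet G m0 d) :=
    le_csSup (bddAbove_nuSet hG hm0) (one_sub_mem_nuSet_of_mem_deltaSet hM hdelta)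
  refine ⟨hδ_le, le_antisymm ?_ (max_le (by linarith) (deltaSet_nonneg hdelta))⟩
  rcases le_total (sSup (nuSet G m0 d)) 1 with hν | hν
  · exact (hδ_le hν).trans (le_max_left _ _)
  · exact (csInf_le hδ_bdd (zero_mem_deltaSet_of_mem_nuSet hM hnu hν)).trans (le_max_right _ _)

/-- if `ν ≤ 1` then `δ ≤ 1 − ν`; hence `δ = max{1 − ν, 0}`. -/
theorem delta_eq_max {V : Type*} [Fintype V] [Nonempty V]
    (G : SimpleGraph V) [DecidableRel G.Adj] (hG : G.Connected)
    (m0 : V → ℝ) (hm0 : ∀ u, 0 < m0 u)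
    (d : Sym2 V → ℝ) (hd : ∀ e ∈ G.edgeSet, 0 < d e)
    (hcard : 2 ≤ Fintype.card V)
    (hnu : sSup (nuSet G m0 d) ∈ nuSet G m0 d)
    (hdelta : sInf (deltaSet G m0 d) ∈ deltaSet G m0 d) :
    (sSup (nuSet G m0 d) ≤ 1 →
      sInf (deltaSet G m0 d) ≤ 1 - sSup (nuSet G m0 d)) ∧
    sInf (deltaSet G m0 d) = max (1 - sSup (nuSet G m0 d)) 0 :=
  delta_eq_max_general G hG m0 hm0 d hnu hdelta
end

section
/- Let μ ∈ ℝ and m̃₁: E → ℝ_{≥0}. If the quadratic form Q(φ) = ‖∑_u m₀(u)φ(u)‖² + μ∑_u m₀(u)‖φ(u)‖² + ∑_{uv∈E} m̃₁(uv)‖φ(u)−φ(v)‖² is nonnegative for all φ: V → ℝ^n, then M ≥ −μ and λ₁(G,(m₀,m̃₁)) ≥ −μ. -/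
open Finset
open scoped Classical

section Helpers
variable {V : Type*} [Fintype V] (G : SimpleGraph V) [DecidableRel G.Adj]

lemma key_pairs (g : V → V → ℝ) :
    ∑ u, ∑ v ∈ G.neighborFinset u, g u v
      = ∑ p ∈ univ.filter (fun p : V × V => G.Adj p.1 p.2), g p.1 p.2 := by
  rw [Finset.sum_filter, Fintype.sum_prod_type]
  simp [SimpleGraph.neighborFinset_eq_filter, Finset.sum_filter]

lemma nsum_swap (g : V → V → ℝ) :
    ∑ u, ∑ v ∈ G.neighborFinset u, g u v = ∑ u, ∑ v ∈ G.neighborFinset u, g v u := by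
  rw [key_pairs, key_pairs]
  refine Finset.sum_bij' (fun p _ => Prod.swap p) (fun p _ => Prod.swap p) ?_ ?_ ?_ ?_ ?_ <;>
    simp [G.adj_comm]

lemma pairs_to_edges (F : Sym2 V → ℝ) :
    ∑ p ∈ univ.filter (fun p : V × V => G.Adj p.1 p.2), F s(p.1, p.2)
      = 2 * ∑ e ∈ G.edgeFinset, F e := by
  rw [← Finset.sum_fiberwise_of_maps_to (g := fun p : V × V => s(p.1, p.2))
    (t := G.edgeFinset)
    (fun p hp => SimpleGraph.mem_edgeFinset.2 ((G.mem_edgeSet).2 (Finset.mem_filter.1 hp).2))]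
  rw [Finset.mul_sum]
  refine Finset.sum_congr rfl fun e he => ?_
  induction e with
  | _ a b =>
    have hab : G.Adj a b := by simpa [SimpleGraph.mem_edgeFinset] using he
    have hfib : (univ.filter (fun p : V × V => G.Adj p.1 p.2)).filter
        (fun p => s(p.1, p.2) = s(a, b)) = {(a, b), (b, a)} := by
      ext ⟨x, y⟩
      simp only [Finset.mem_filter, Finset.mem_univ, true_and, Sym2.eq_iff,
        Finset.mem_insert, Finset.mem_singleton, Prod.mk.injEq]
      constructor
      · rintro ⟨_, ⟨rfl, rfl⟩ | ⟨rfl, rfl⟩⟩ <;> simp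
      · rintro (⟨rfl, rfl⟩ | ⟨rfl, rfl⟩) <;> simp [hab, hab.symm]
    rw [hfib]
    have : ((a, b) : V × V) ≠ (b, a) := by
      intro h; exact hab.ne (congrArg Prod.fst h)
    rw [Finset.sum_insert (by simp only [Finset.mem_singleton]; exact this),
      Finset.sum_singleton, show s(b, a) = s(a, b) from Sym2.eq_swap]
    ring

lemma nsum_to_edges (F : Sym2 V → ℝ) :
    ∑ u, ∑ v ∈ G.neighborFinset u, F s(u, v) = 2 * ∑ e ∈ G.edgeFinset, F e := by
  rw [key_pairs]; exact pairs_to_edges G F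

variable (m0 : V → ℝ) (hm0 : ∀ u, 0 < m0 u) (mt : Sym2 V → ℝ)
  (lam : ℝ) (f : V → ℝ)
  (heig : lapl G m0 mt f = fun u => lam * f u)

include hm0 heig in
lemma eigen_pt : ∀ u, (∑ v ∈ G.neighborFinset u, mt s(u, v)) * f u
    - ∑ v ∈ G.neighborFinset u, mt s(u, v) * f v = lam * (m0 u * f u) := by
  intro u
  have h := congrFun heig u
  simp only [lapl] at h
  have hne : m0 u ≠ 0 := (hm0 u).ne'
  field_simp at h
  linarith [h]

include hm0 heig in
lemma eigen_A : ∑ u, ∑ v ∈ G.neighborFinset u, mt s(u, v) * (f u - f v)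
    = lam * ∑ u, m0 u * f u := by
  rw [Finset.mul_sum]
  refine Finset.sum_congr rfl fun u _ => ?_
  have : ∑ v ∈ G.neighborFinset u, mt s(u, v) * (f u - f v)
      = (∑ v ∈ G.neighborFinset u, mt s(u, v)) * f u
        - ∑ v ∈ G.neighborFinset u, mt s(u, v) * f v := by
    rw [Finset.sum_mul, ← Finset.sum_sub_distrib]
    exact Finset.sum_congr rfl fun v _ => by ring
  rw [this, eigen_pt G m0 hm0 mt lam f heig u]

lemma skew_zero (g : V → V → ℝ) (hg : ∀ u v, g v u = -g u v) :
    ∑ u, ∑ v ∈ G.neighborFinset u, g u v = 0 := by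
  have hs := nsum_swap G g
  have : ∑ u, ∑ v ∈ G.neighborFinset u, g v u
      = -∑ u, ∑ v ∈ G.neighborFinset u, g u v := by
    rw [← Finset.sum_neg_distrib]
    exact Finset.sum_congr rfl fun u _ => by
      rw [← Finset.sum_neg_distrib]
      exact Finset.sum_congr rfl fun v _ => hg u v
  linarith [hs, this]

include hm0 heig in
lemma eigen_sum_zero (hlam0 : lam ≠ 0) : ∑ u, m0 u * f u = 0 := by
  have hA := eigen_A G m0 hm0 mt lam f heig
  have h0 := skew_zero G (fun u v => mt s(u, v) * (f u - f v))
    (fun u v => by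
      show mt s(v, u) * (f v - f u) = -(mt s(u, v) * (f u - f v))
      rw [show s(v, u) = s(u, v) from Sym2.eq_swap]; ring)
  rw [h0] at hA
  exact (mul_eq_zero.1 hA.symm).resolve_left hlam0

include hm0 heig in
lemma eigen_B : ∑ u, ∑ v ∈ G.neighborFinset u, mt s(u, v) * (f u - f v) ^ 2
    = 2 * (lam * ∑ u, m0 u * f u ^ 2) := by
  have hT : ∑ u, ∑ v ∈ G.neighborFinset u, mt s(u, v) * (f u - f v) * f u
      = lam * ∑ u, m0 u * f u ^ 2 := by
    rw [Finset.mul_sum]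
    refine Finset.sum_congr rfl fun u _ => ?_
    have : ∑ v ∈ G.neighborFinset u, mt s(u, v) * (f u - f v) * f u
        = ((∑ v ∈ G.neighborFinset u, mt s(u, v)) * f u
          - ∑ v ∈ G.neighborFinset u, mt s(u, v) * f v) * f u := by
      rw [sub_mul, Finset.sum_mul, Finset.sum_mul, Finset.sum_mul, ← Finset.sum_sub_distrib]
      exact Finset.sum_congr rfl fun v _ => by ring
    rw [this, eigen_pt G m0 hm0 mt lam f heig u]
    ring
  have hswap := nsum_swap G (fun u v => mt s(u, v) * (f u - f v) * f u)
  have hcomb : ∑ u, ∑ v ∈ G.neighborFinset u, mt s(u, v) * (f u - f v) ^ 2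
      = ∑ u, ∑ v ∈ G.neighborFinset u, mt s(u, v) * (f u - f v) * f u
        + ∑ u, ∑ v ∈ G.neighborFinset u, mt s(v, u) * (f v - f u) * f v := by
    rw [← Finset.sum_add_distrib]
    refine Finset.sum_congr rfl fun u _ => ?_
    rw [← Finset.sum_add_distrib]
    refine Finset.sum_congr rfl fun v _ => ?_
    rw [show s(v, u) = s(u, v) from Sym2.eq_swap]
    ring
  rw [hcomb, ← hswap, hT]
  ring

end Helpers

/-- if the quadratic form
`Q(φ) = ‖∑ m₀(u)φ(u)‖² + μ ∑ m₀(u)‖φ(u)‖² + ∑_{uv} m̃₁(uv)‖φ(u)−φ(v)‖²`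
is nonnegative for all `φ`, then `M ≥ −μ` and `λ₁(G,(m₀,m̃₁)) ≥ −μ`. -/
theorem lagrange_nonneg_constraints {V : Type*} [Fintype V] [Nonempty V]
    (G : SimpleGraph V) [DecidableRel G.Adj] (hG : G.Connected)
    (m0 : V → ℝ) (hm0 : ∀ u, 0 < m0 u)
    (mt : Sym2 V → ℝ) (hmt : ∀ e, 0 ≤ mt e) (hconn : (posSub G mt).Connected)
    (lam : ℝ) (hlam : IsLambdaOne G m0 mt lam) (μ : ℝ)
    (hQ : ∀ φ : V → EuclideanSpace ℝ (Fin (Fintype.card V)),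
      0 ≤ ‖∑ u, m0 u • φ u‖ ^ 2 + μ * ∑ u, m0 u * ‖φ u‖ ^ 2 + edgeNormSq G mt φ) :
    (∑ u, m0 u) ≥ -μ ∧ lam ≥ -μ := by
  classical
  obtain ⟨hlam0, ⟨f, hf0, heig⟩, -⟩ := hlam
  have hM : 0 < ∑ u, m0 u := Finset.sum_pos (fun u _ => hm0 u) Finset.univ_nonempty
  have hn : 0 < Fintype.card V := Fintype.card_pos
  set e0 : EuclideanSpace ℝ (Fin (Fintype.card V)) :=
    EuclideanSpace.single ⟨0, hn⟩ (1 : ℝ) with he0def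
  have he0 : ‖e0‖ = 1 := by simp [he0def, EuclideanSpace.norm_single]
  constructor
  · -- Part 1 : M ≥ -μ
    have h := hQ (fun _ => e0)
    beta_reduce at h
    have h1 : (∑ _u : V, m0 _u • e0) = (∑ u, m0 u) • e0 := by rw [Finset.sum_smul]
    have h2 : ‖(∑ u, m0 u) • e0‖ ^ 2 = (∑ u, m0 u) ^ 2 := by
      rw [norm_smul, he0, mul_one, Real.norm_eq_abs, sq_abs]
    have h4 : edgeNormSq G mt (fun _ => e0) = 0 := by
      unfold edgeNormSq
      refine Finset.sum_eq_zero fun e he => ?_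
      induction e with
      | _ a b => simp
    rw [h1, h2, h4] at h
    simp only [he0, one_pow, mul_one] at h
    nlinarith [hM]
  · -- Part 2 : lam ≥ -μ
    set S := ∑ u, m0 u * f u ^ 2 with hS
    have hSpos : 0 < S := by
      obtain ⟨u0, hu0⟩ := Function.ne_iff.1 hf0
      have hu0' : f u0 ≠ 0 := by simpa using hu0
      refine Finset.sum_pos' (fun u _ => ?_) ⟨u0, Finset.mem_univ u0, ?_⟩
      · have := (hm0 u).le; positivity
      · have := hm0 u0; positivity
    have hsum0 := eigen_sum_zero G m0 hm0 mt lam f heig hlam0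
    have hB := eigen_B G m0 hm0 mt lam f heig
    set Fsc : Sym2 V → ℝ := fun e => mt e *
      Sym2.lift ⟨fun a b => (f a - f b) ^ 2, fun a b => by ring⟩ e with hFsc
    have hlift : ∀ a b : V, Fsc s(a, b) = mt s(a, b) * (f a - f b) ^ 2 := by
      intro a b; simp [hFsc]
    have hEdge : ∑ e ∈ G.edgeFinset, Fsc e = lam * S := by
      have h2 := nsum_to_edges G Fsc
      have h3 : ∑ u, ∑ v ∈ G.neighborFinset u, Fsc s(u, v)
          = ∑ u, ∑ v ∈ G.neighborFinset u, mt s(u, v) * (f u - f v) ^ 2 :=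
        Finset.sum_congr rfl fun u _ => Finset.sum_congr rfl fun v _ => hlift u v
      rw [h3, hB] at h2
      linarith
    have hφnorm : ∀ u, ‖f u • e0‖ ^ 2 = f u ^ 2 := fun u => by
      rw [norm_smul, he0, mul_one, Real.norm_eq_abs, sq_abs]
    have hQ2 := hQ (fun u => f u • e0)
    beta_reduce at hQ2
    have hz : (∑ u, m0 u • f u • e0) = (0 : EuclideanSpace ℝ (Fin (Fintype.card V))) := by
      simp only [smul_smul]
      rw [← Finset.sum_smul, hsum0, zero_smul]
    have hterm2 : (∑ u, m0 u * ‖f u • e0‖ ^ 2) = S :=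
      Finset.sum_congr rfl fun u _ => by rw [hφnorm]
    have hterm3 : edgeNormSq G mt (fun u => f u • e0) = ∑ e ∈ G.edgeFinset, Fsc e := by
      unfold edgeNormSq
      refine Finset.sum_congr rfl fun e he => ?_
      induction e with
      | _ a b =>
        rw [Sym2.lift_mk, hlift]
        show mt s(a, b) * ‖f a • e0 - f b • e0‖ ^ 2 = mt s(a, b) * (f a - f b) ^ 2
        rw [show f a • e0 - f b • e0 = (f a - f b) • e0 from (sub_smul _ _ _).symm,
          norm_smul, he0, mul_one, Real.norm_eq_abs, sq_abs]
    rw [hz, hterm2, hterm3, hEdge, norm_zero] at hQ2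
    nlinarith [hSpos]
end
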